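/- arXiv:2012.01033 — 3 statements merged into one kernel-verified Lean document; each statement's English description precedes it below -/
import Mathlib

section
/- Given an m×m matrix d over F with d² = 0 and an entry d^i_j ≠ 0, after (1) adding to each row k with d^k_j ≠ 0 (k ≠ i) the i-th row multiplied by −(d^i_j)^{-1} d^k_j, and then (2) deleting rows i and j and columns i and j, the resulting (m−2)×(m−2) matrix d' also satisfies (d')² = 0. -/
/-!
Write `e` for the row-reduced matrix. Its rows are combinations of rows of `d`, so `e * d = 0`;
moreover `e = d - (d i j)⁻¹ • (d · j) ⊗ (d i ·) + eᵢ ⊗ (d i ·)`, and multiplying on the left by `e`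
kills the first two terms, leaving `(e * e) a b = e a i * d i b`. Deleting the indices `i` and `j`
from the sum defining `(e * e) a b` removes exactly `e a i * e i b = e a i * d i b` and
`e a j * e j b`, and the latter vanishes because `e a j = 0` for `a ≠ i`.
-/

open Matrix Finset

theorem Fintype.sum_subtype_ne_and_ne {n M : Type*} [Fintype n] [DecidableEq n]
    [AddCommGroup M] {i j : n} (hij : i ≠ j) (g : n → M) :
    ∑ c : {k // k ≠ i ∧ k ≠ j}, g c = ∑ c, g c - g i - g j := by
  rw [← Finset.sum_subtype (univ \ {i, j}) (by simp [not_or]), sub_sub, ← sum_pair hij,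
    sum_sdiff_eq_sub (subset_univ _)]

namespace Matrix

theorem submatrix_compl_pair_mul_self_apply {n R : Type*} [Fintype n] [DecidableEq n]
    [NonUnitalNonAssocRing R] (e : Matrix n n R) {i j : n} (hij : i ≠ j)
    (a b : {k // k ≠ i ∧ k ≠ j}) :
    (e.submatrix Subtype.val Subtype.val * e.submatrix Subtype.val Subtype.val :
      Matrix {k // k ≠ i ∧ k ≠ j} {k // k ≠ i ∧ k ≠ j} R) a b
      = (e * e) a b - e a i * e i b - e a j * e j b := by
  simp only [mul_apply]
  exact Fintype.sum_subtype_ne_and_ne hij fun c => e a c * e c b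

section PivotRowReduce

variable {n F : Type*} [DecidableEq n] [Field F] (d : Matrix n n F) (i j : n)

def pivotRowReduce : Matrix n n F :=
  of fun k l => if k = i then d i l else d k l - (d i j)⁻¹ * d k j * d i l

@[simp]
theorem pivotRowReduce_apply_pivot_row (l : n) : pivotRowReduce d i j i l = d i l := by
  simp [pivotRowReduce]

theorem pivotRowReduce_apply_of_ne {k : n} (hk : k ≠ i) (l : n) :
    pivotRowReduce d i j k l = d k l - (d i j)⁻¹ * d k j * d i l := by
  simp [pivotRowReduce, hk]

theorem pivotRowReduce_apply_pivot_col {k : n} (hk : k ≠ i) (hdij : d i j ≠ 0) :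
    pivotRowReduce d i j k j = 0 := by
  rw [pivotRowReduce_apply_of_ne d i j hk, mul_assoc, mul_comm (d k j), ← mul_assoc,
    inv_mul_cancel₀ hdij, one_mul, sub_self]

theorem pivotRowReduce_apply_eq_add (hdij : d i j ≠ 0) (k l : n) :
    pivotRowReduce d i j k l
      = d k l - (d i j)⁻¹ * d k j * d i l + if k = i then d i l else 0 := by
  by_cases hk : k = i
  · subst hk
    rw [pivotRowReduce_apply_pivot_row, if_pos rfl, inv_mul_cancel₀ hdij]
    ring
  · rw [pivotRowReduce_apply_of_ne d i j hk, if_neg hk, add_zero]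

variable [Fintype n]

theorem pivotRowReduce_mul_eq_zero (hd : d * d = 0) : pivotRowReduce d i j * d = 0 := by
  ext k l
  have hdd (a : n) : ∑ c, d a c * d c l = 0 := by rw [← mul_apply, hd, zero_apply]
  by_cases hk : k = i
  · subst hk
    simpa [mul_apply] using hdd k
  · simp only [mul_apply, pivotRowReduce_apply_of_ne d i j hk, sub_mul, sum_sub_distrib,
      mul_assoc, ← mul_sum, hdd, mul_zero, sub_zero, zero_apply]

theorem pivotRowReduce_mul_self_apply (hd : d * d = 0) (hdij : d i j ≠ 0) (a b : n) :
    (pivotRowReduce d i j * pivotRowReduce d i j) a b = pivotRowReduce d i j a i * d i b := by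
  set e := pivotRowReduce d i j
  have hed (l : n) : ∑ c, e a c * d c l = 0 := by
    rw [← mul_apply, pivotRowReduce_mul_eq_zero d i j hd, zero_apply]
  calc (e * e) a b
      = ∑ c, e a c * d c b - (d i j)⁻¹ * d i b * ∑ c, e a c * d c j + e a i * d i b := by
        simp only [mul_apply, e, pivotRowReduce_apply_eq_add d i j hdij _ b, mul_add, mul_sub,
          mul_ite, mul_zero, sum_add_distrib, sum_sub_distrib, sum_ite_eq', mem_univ, if_true,
          mul_sum]
        congr 2
        exact sum_congr rfl fun c _ => by ring
    _ = e a i * d i b := by rw [hed, hed]; ring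

end PivotRowReduce

end Matrix

open Matrix in
/-- Given `d` with `d² = 0` and `d i j ≠ 0`: after adding to each row `k ≠ i`
the `i`-th row multiplied by `-(d i j)⁻¹ * d k j`, and then deleting rows and
columns `i` and `j`, the resulting matrix `d'` also satisfies `d'² = 0`. -/
theorem split_reduction_square_zero (F : Type*) [Field F] (m : ℕ)
    (d : Matrix (Fin m) (Fin m) F) (hd : d * d = 0)
    (i j : Fin m) (hij : i ≠ j) (hdij : d i j ≠ 0)
    (e : Matrix (Fin m) (Fin m) F)
    (he : e = Matrix.of fun k l =>
      if k = i then d i l else d k l - (d i j)⁻¹ * d k j * d i l)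
    (d' : Matrix {k : Fin m // k ≠ i ∧ k ≠ j} {k : Fin m // k ≠ i ∧ k ≠ j} F)
    (hd' : d' = Matrix.of fun a b => e a.1 b.1) :
    d' * d' = 0 := by
  change e = pivotRowReduce d i j at he
  change d' = e.submatrix Subtype.val Subtype.val at hd'
  subst he hd'
  ext a b
  rw [submatrix_compl_pair_mul_self_apply _ hij, pivotRowReduce_mul_self_apply d i j hd hdij,
    pivotRowReduce_apply_pivot_row, pivotRowReduce_apply_pivot_col d i j a.2.1 hdij, zero_mul,
    sub_self, sub_zero, Matrix.zero_apply]
end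

section
/- Let X be a finite set of generators each labelled with an entrance time ent(x) ∈ [0,∞), and let d be a square matrix indexed by X. If d has at least one non-zero entry, then there exists a pair of indices (i, j) with d^i_j ≠ 0 such that ent(x_i) = max{ent(x_h) : d^h_j ≠ 0} and ent(x_j) = min{ent(x_h) : d^i_h ≠ 0}. -/
open Finset

/- Take `j` of least label among the non-zero columns, then `i` of greatest label among the
non-zero rows of column `j`. Any `h` with `d i h ≠ 0` is again a non-zero column, so `c j ≤ c h`. -/
theorem Matrix.exists_split_entry {m n α β γ : Type*} [Fintype m] [Fintype n] [Zero α]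
    [LinearOrder β] [LinearOrder γ] (d : Matrix m n α) (hd : d ≠ 0) (r : m → β) (c : n → γ) :
    ∃ i j, d i j ≠ 0 ∧ (∀ h, d h j ≠ 0 → r h ≤ r i) ∧ (∀ h, d i h ≠ 0 → c j ≤ c h) := by
  classical
  obtain ⟨i₀, j₀, h₀⟩ : ∃ i j, d i j ≠ 0 := by
    by_contra! h
    exact hd (Matrix.ext h)
  obtain ⟨j, hj, hj_min⟩ := (univ.filter fun j => ∃ i, d i j ≠ 0).exists_min_image c
    ⟨j₀, by simpa using ⟨i₀, h₀⟩⟩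
  obtain ⟨i, hi, hi_max⟩ := (univ.filter fun i => d i j ≠ 0).exists_max_image r
    (by simpa [Finset.Nonempty] using hj)
  exact ⟨i, j, by simpa using hi, fun h hh => hi_max h (by simpa using hh),
    fun h hh => hj_min h (by simpa using ⟨i, hh⟩)⟩

theorem exists_split_pair_general (F : Type*) [Field F] (m : ℕ)
    (d : Matrix (Fin m) (Fin m) F)
    (ent : Fin m → ℝ)
    (hd : d ≠ 0) :
    ∃ i j : Fin m, d i j ≠ 0 ∧
      (∀ h, d h j ≠ 0 → ent h ≤ ent i) ∧
      (∀ h, d i h ≠ 0 → ent j ≤ ent h) :=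
  d.exists_split_entry hd ent ent

/-- If the square matrix `d`, whose rows/columns are labelled by entrance times
`ent`, has a non-zero entry, then there is a pair `(i, j)` satisfying the split
conditions: `d i j ≠ 0`, `i` maximizes `ent` among the non-zero rows of column
`j`, and `j` minimizes `ent` among the non-zero columns of row `i`. -/
theorem exists_split_pair (F : Type*) [Field F] (m : ℕ)
    (d : Matrix (Fin m) (Fin m) F)
    (ent : Fin m → ℝ) (hent : ∀ k, 0 ≤ ent k)
    (hd : d ≠ 0) :
    ∃ i j : Fin m, d i j ≠ 0 ∧
      (∀ h, d h j ≠ 0 → ent h ≤ ent i) ∧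
      (∀ h, d i h ≠ 0 → ent j ≤ ent h) :=
  exists_split_pair_general F m d ent hd
end

section
/- Let δ : V → V satisfy δ² = 0 with matrix d in a basis x_1,…,x_m, and suppose (i,j) satisfies the split conditions with respect to an entrance-time labelling ent. Then after the two changes of basis described (replacing x_i by δ(x_j), then subtracting multiples of x_j from the other generators), the resulting basis elements retain the same entrance times: ent(x̃_k) = ent(x_k) for all k, where the entrance time of a linear combination Σ α_r x_r (α_r ≠ 0 for some r) is max{ent(x_r) : α_r ≠ 0}. -/
/-!
Replacing `xᵢ` by `δ(xⱼ)` is the matrix `P = 1` with column `i` replaced by `d · j`, whose row `i`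
is `d i j • eᵢ`. Hence row `i` of `P⁻¹ d P` is row `i` of `d P` divided by `d i j`: its entries are
`d i k / d i j` for `k ≠ i` and `(d²) i j / d i j = 0` for `k = i`. The new basis is therefore
explicit: `x̃ⱼ = xⱼ`, `x̃ᵢ = δ(xⱼ)` and `x̃ₖ = xₖ - (d i k / d i j) xⱼ` otherwise. The entrance time
of `x̃ᵢ` is controlled by SC2, and the correction term of `x̃ₖ` only appears when `d i k ≠ 0`,
where SC3 gives `ent j ≤ ent k`.
-/

namespace Matrix

variable {m n o R : Type*} [Fintype n] [DecidableEq n]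

theorem det_one_updateCol [CommRing R] (i : n) (v : n → R) :
    ((1 : Matrix n n R).updateCol i v).det = v i := by
  rw [← cramer_apply, cramer_one]
  rfl

theorem one_updateCol_mul_apply_self [NonAssocSemiring R] (i : n) (v : n → R)
    (X : Matrix n o R) (k : o) :
    ((1 : Matrix n n R).updateCol i v * X) i k = v i * X i k := by
  rw [mul_apply, Finset.sum_eq_single i]
  · simp
  · intro c _ hc
    simp [hc, Ne.symm hc]
  · simp

theorem inv_mul_mul_one_updateCol_apply_self [Field R] (i : n) (v : n → R) (hv : v i ≠ 0)
    (A : Matrix n n R) (k : n) :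
    (((1 : Matrix n n R).updateCol i v)⁻¹ * A * (1 : Matrix n n R).updateCol i v) i k =
      (A * (1 : Matrix n n R).updateCol i v) i k / v i := by
  set P := (1 : Matrix n n R).updateCol i v
  have hP : IsUnit P.det := by
    rw [det_one_updateCol]
    exact hv.isUnit
  rw [eq_div_iff hv, mul_comm, ← one_updateCol_mul_apply_self, ← Matrix.mul_assoc,
    ← Matrix.mul_assoc, mul_nonsing_inv P hP, Matrix.one_mul]

theorem mul_of_ite_apply [NonAssocSemiring R] (A : Matrix m n R) (j : n) (c : n → R)
    (r : m) (k : n) :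
    (A * of fun r k => if r = k then 1 else if r = j then c k else 0) r k =
      A r k + if k = j then 0 else A r j * c k := by
  have hsplit : ∀ l, A r l * (if l = k then 1 else if l = j then c k else 0) =
      (if l = k then A r l else 0) + if l = j then (if k = j then 0 else A r j * c k) else 0 := by
    intro l
    by_cases hlk : l = k <;> by_cases hlj : l = j <;> by_cases hkj : k = j <;> simp_all
  simp only [mul_apply, of_apply, hsplit, Finset.sum_add_distrib, Finset.sum_ite_eq',
    Finset.mem_univ, if_true]

end Matrix

open Matrix

theorem split_basis_change_apply {F : Type*} [Field F] {m : ℕ} {d : Matrix (Fin m) (Fin m) F}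
    (hd : d * d = 0) {i j : Fin m} (hij : i ≠ j) (hdij : d i j ≠ 0)
    {P Q : Matrix (Fin m) (Fin m) F}
    (hP : P = (1 : Matrix (Fin m) (Fin m) F).updateCol i (fun r => d r j))
    (hQ : Q = Matrix.of fun r k =>
      if r = k then 1 else if r = j then -((P⁻¹ * d * P) i k) else 0) (r k : Fin m) :
    (P * Q) r k =
      if k = i then d r j else if r = k then 1 else if r = j then -(d i k / d i j) else 0 := by
  have hPj : ∀ r, P r j = if r = j then 1 else 0 := by
    simp [hP, hij.symm, one_apply]
  have hdP : (d * P) i k = if k = i then 0 else d i k := by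
    rw [hP, mul_updateCol, Matrix.mul_one, updateCol_apply]
    split_ifs
    · exact (mul_apply' (M := d) (N := d) (i := i) (k := j)).symm.trans
        (congrFun (congrFun hd i) j)
    · rfl
  rw [hQ, mul_of_ite_apply, hP, inv_mul_mul_one_updateCol_apply_self i _ hdij, ← hP, hdP, hPj,
    hP, updateCol_apply, one_apply]
  split_ifs <;> simp_all

/-- The columns of `P * Q` are the new basis vectors `x̃ₖ` in the original basis, so the
conclusion says exactly that `ent (x̃ₖ) = ent (xₖ)`: the coefficient of `xₖ` in `x̃ₖ` is non-zero
and every `x_r` occurring in `x̃ₖ` has `ent r ≤ ent k`. -/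
theorem entrance_times_preserved_general (F : Type*) [Field F] (m : ℕ)
    (d : Matrix (Fin m) (Fin m) F) (hd : d * d = 0)
    (ent : Fin m → ℝ)
    (i j : Fin m) (hij : i ≠ j) (hdij : d i j ≠ 0)
    (hSC2 : ∀ h, d h j ≠ 0 → ent h ≤ ent i)
    (hSC3 : ∀ h, d i h ≠ 0 → ent j ≤ ent h)
    (P Q : Matrix (Fin m) (Fin m) F)
    (hP : P = (1 : Matrix (Fin m) (Fin m) F).updateCol i (fun r => d r j))
    (hQ : Q = Matrix.of fun r k =>
      if r = k then 1 else if r = j then -((P⁻¹ * d * P) i k) else 0) :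
    ∀ k, (P * Q) k k ≠ 0 ∧ ∀ r, (P * Q) r k ≠ 0 → ent r ≤ ent k := by
  intro k
  simp only [split_basis_change_apply hd hij hdij hP hQ]
  refine ⟨by split_ifs <;> simp_all, fun r hr => ?_⟩
  split_ifs at hr with hki hrk hrj
  · exact hki ▸ hSC2 r hr
  · exact hrk ▸ le_rfl
  · exact hrj ▸ hSC3 k (by simpa [hdij] using hr)
  · exact absurd rfl hr

/-- Entrance times are preserved by the two changes of basis of the splitting
procedure.  `d` is the total boundary matrix (`d² = 0`, and `d r c ≠ 0` forces
`ent r ≤ ent c`), and `(i, j)` satisfies the split conditions.  The first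
change of basis replaces `xᵢ` by `δ(xⱼ)` (matrix `P`), the second subtracts
multiples of the new `xⱼ` from the other generators (matrix `Q`), so the new
basis vectors are the columns of `P * Q` in the original basis.  The entrance
time of a nonzero linear combination being the maximum of `ent` over the basis
vectors with non-zero coefficient, the claim `ent (x̃ₖ) = ent (xₖ)` says: the
`k`-th diagonal entry of `P * Q` is non-zero, and every non-zero entry of its
`k`-th column lies in a row `r` with `ent r ≤ ent k`. -/
theorem entrance_times_preserved (F : Type*) [Field F] (m : ℕ)
    (d : Matrix (Fin m) (Fin m) F) (hd : d * d = 0)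
    (ent : Fin m → ℝ) (hent0 : ∀ k, 0 ≤ ent k)
    (hfilt : ∀ r c, d r c ≠ 0 → ent r ≤ ent c)
    (i j : Fin m) (hij : i ≠ j) (hdij : d i j ≠ 0)
    (hSC2 : ∀ h, d h j ≠ 0 → ent h ≤ ent i)
    (hSC3 : ∀ h, d i h ≠ 0 → ent j ≤ ent h)
    (P Q : Matrix (Fin m) (Fin m) F)
    (hP : P = (1 : Matrix (Fin m) (Fin m) F).updateCol i (fun r => d r j))
    (hQ : Q = Matrix.of fun r k =>
      if r = k then 1 else if r = j then -((P⁻¹ * d * P) i k) else 0) :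
    ∀ k, (P * Q) k k ≠ 0 ∧ ∀ r, (P * Q) r k ≠ 0 → ent r ≤ ent k :=
  entrance_times_preserved_general F m d hd ent i j hij hdij hSC2 hSC3 P Q hP hQ
end
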